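/- Let r₁, r₂, r₃ ∈ ℝ³ and e₁, e₂, e₃ ∈ ℝ³ with e_i ≠ r_i, such that all six points lie in a common 2-plane and r₁, r₂, r₃ are affinely independent. If the three lines r_i e_i are concurrent in a point c with c ∉ affineSpan{r_i, r_j} for all i ≠ j, then there exist nonzero reals w₁₂, w₂₃, w₃₁ (cycle tensions) and u₁, u₂, u₃ (framing tensions) with equilibrium at each r_i: u_i(r_i - e_i) + w(r_i - r_{i-1}) + w'(r_i - r_{i+1}) = 0 with the appropriate cycle tensions w, w'. -/

import Mathlib

/-! Write the concurrency point as `c = a • r₁ + b • r₂ + d • r₃` with `a + b + d = 1`; it has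
such coordinates because it lies on the line through `r₁` and `e₁`, hence in the plane. Since `c`
avoids the side lines, `a`, `b`, `d` are non-zero, and so is each line parameter `sᵢ` in
`c = rᵢ + sᵢ • (eᵢ - rᵢ)`. At `r₁` we have `s₁ • (r₁ - e₁) = r₁ - c = b • (r₁ - r₂) + d • (r₁ - r₃)`;
multiplying by `a` makes the coefficients symmetric, so the cycle tensions `wᵢⱼ = -(λᵢ λⱼ)` and
the framing tensions `uᵢ = sᵢ λᵢ`, with `(λ₁, λ₂, λ₃) = (a, b, d)`, balance at every vertex. -/

section Barycentric

variable {k V : Type*} [CommRing k] [AddCommGroup V] [Module k V]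

theorem exists_eq_smul_add_smul_add_smul_of_mem_affineSpan_triple {p q r x : V}
    (hx : x ∈ affineSpan k ({p, q, r} : Set V)) :
    ∃ a b d : k, a + b + d = 1 ∧ x = a • p + b • q + d • r := by
  have hrange : ({p, q, r} : Set V) = Set.range ![p, q, r] := by
    simp only [Matrix.range_cons, Matrix.range_empty, Set.union_empty, Set.singleton_union]
  rw [hrange] at hx
  obtain ⟨w, hw, rfl⟩ := eq_affineCombination_of_mem_affineSpan_of_fintype hx
  rw [Finset.affineCombination_eq_linear_combination _ _ _ hw] at *
  rw [Fin.sum_univ_three] at hw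
  exact ⟨w 0, w 1, w 2, hw, by simp [Fin.sum_univ_three]⟩

theorem smul_add_smul_mem_affineSpan_pair {a b : k} (h : a + b = 1) (p q : V) :
    a • p + b • q ∈ line[k, p, q] := by
  rw [eq_sub_of_add_eq h, ← AffineMap.lineMap_apply_module]
  exact AffineMap.lineMap_mem_affineSpan_pair b p q

theorem coord_ne_zero_of_notMem_affineSpan_pair {p q r x : V} {a b d : k}
    (hsum : a + b + d = 1) (hx : x = a • p + b • q + d • r) (hpq : x ∉ line[k, p, q]) :
    d ≠ 0 := by
  rintro rfl
  rw [add_zero] at hsum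
  rw [zero_smul, add_zero] at hx
  exact hpq (hx ▸ smul_add_smul_mem_affineSpan_pair hsum p q)

theorem line_param_ne_zero_of_notMem_affineSpan_pair {p q e x : V} {s : k}
    (hx : x = p + s • (e - p)) (hpq : x ∉ line[k, p, q]) : s ≠ 0 := by
  rintro rfl
  rw [zero_smul, add_zero] at hx
  exact hpq (hx ▸ left_mem_affineSpan_pair k p q)

theorem mem_affineSpan_of_eq_add_smul_sub {S : Set V} {p e x : V} {s : k}
    (hp : p ∈ affineSpan k S) (he : e ∈ affineSpan k S) (hx : x = p + s • (e - p)) :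
    x ∈ affineSpan k S := by
  rw [hx, add_comm, ← AffineMap.lineMap_apply_module']
  exact AffineMap.lineMap_mem s hp he

theorem equilibrium_of_eq_barycentric {p q r e x : V} {a b d s : k}
    (hsum : a + b + d = 1) (hx : x = a • p + b • q + d • r) (hline : x = p + s • (e - p)) :
    (s * a) • (p - e) + (-(d * a)) • (p - r) + (-(a * b)) • (p - q) = 0 := by
  have hp : p = (a + b + d) • p := by rw [hsum, one_smul]
  linear_combination (norm := module) (-a) • hx + a • hline + a • hp

end Barycentric

theorem stmt_12_general (r₁ r₂ r₃ e₁ e₂ e₃ : Fin 3 → ℝ)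
    (hplanar₁ : e₁ ∈ affineSpan ℝ ({r₁, r₂, r₃} : Set (Fin 3 → ℝ)))
    (c : Fin 3 → ℝ)
    (hc₁ : ∃ s : ℝ, c = r₁ + s • (e₁ - r₁))
    (hc₂ : ∃ s : ℝ, c = r₂ + s • (e₂ - r₂))
    (hc₃ : ∃ s : ℝ, c = r₃ + s • (e₃ - r₃))
    (hc₁₂ : c ∉ affineSpan ℝ ({r₁, r₂} : Set (Fin 3 → ℝ)))
    (hc₂₃ : c ∉ affineSpan ℝ ({r₂, r₃} : Set (Fin 3 → ℝ)))
    (hc₃₁ : c ∉ affineSpan ℝ ({r₃, r₁} : Set (Fin 3 → ℝ))) :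
    ∃ w₁₂ w₂₃ w₃₁ u₁ u₂ u₃ : ℝ,
      w₁₂ ≠ 0 ∧ w₂₃ ≠ 0 ∧ w₃₁ ≠ 0 ∧ u₁ ≠ 0 ∧ u₂ ≠ 0 ∧ u₃ ≠ 0 ∧
      u₁ • (r₁ - e₁) + w₃₁ • (r₁ - r₃) + w₁₂ • (r₁ - r₂) = 0 ∧
      u₂ • (r₂ - e₂) + w₁₂ • (r₂ - r₁) + w₂₃ • (r₂ - r₃) = 0 ∧
      u₃ • (r₃ - e₃) + w₂₃ • (r₃ - r₂) + w₃₁ • (r₃ - r₁) = 0 := by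
  obtain ⟨s₁, h₁⟩ := hc₁
  obtain ⟨s₂, h₂⟩ := hc₂
  obtain ⟨s₃, h₃⟩ := hc₃
  have hc : c ∈ affineSpan ℝ ({r₁, r₂, r₃} : Set (Fin 3 → ℝ)) :=
    mem_affineSpan_of_eq_add_smul_sub (subset_affineSpan ℝ _ (by simp)) hplanar₁ h₁
  obtain ⟨a, b, d, hsum, hcoord⟩ := exists_eq_smul_add_smul_add_smul_of_mem_affineSpan_triple hc
  have hsum₂ : b + d + a = 1 := by linarith
  have hsum₃ : d + a + b = 1 := by linarith
  have hcoord₂ : c = b • r₂ + d • r₃ + a • r₁ := hcoord.trans (by abel)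
  have hcoord₃ : c = d • r₃ + a • r₁ + b • r₂ := hcoord.trans (by abel)
  have hd : d ≠ 0 := coord_ne_zero_of_notMem_affineSpan_pair hsum hcoord hc₁₂
  have ha : a ≠ 0 := coord_ne_zero_of_notMem_affineSpan_pair hsum₂ hcoord₂ hc₂₃
  have hb : b ≠ 0 := coord_ne_zero_of_notMem_affineSpan_pair hsum₃ hcoord₃ hc₃₁
  have hs₁ := line_param_ne_zero_of_notMem_affineSpan_pair h₁ hc₁₂
  have hs₂ := line_param_ne_zero_of_notMem_affineSpan_pair h₂ hc₂₃
  have hs₃ := line_param_ne_zero_of_notMem_affineSpan_pair h₃ hc₃₁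
  exact ⟨-(a * b), -(b * d), -(d * a), s₁ * a, s₂ * b, s₃ * d,
    by simp [ha, hb], by simp [hb, hd], by simp [hd, ha],
    mul_ne_zero hs₁ ha, mul_ne_zero hs₂ hb, mul_ne_zero hs₃ hd,
    equilibrium_of_eq_barycentric hsum hcoord h₁,
    equilibrium_of_eq_barycentric hsum₂ hcoord₂ h₂,
    equilibrium_of_eq_barycentric hsum₃ hcoord₃ h₃⟩

/-- Base case of the join/intersection criterion: a planar framed triangle in
`ℝ³` whose framing lines are concurrent (in a generic point) admits an
everywhere non-zero self-stress. -/
theorem stmt_12 (r₁ r₂ r₃ e₁ e₂ e₃ : Fin 3 → ℝ)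
    (hne₁ : e₁ ≠ r₁) (hne₂ : e₂ ≠ r₂) (hne₃ : e₃ ≠ r₃)
    (hind : AffineIndependent ℝ ![r₁, r₂, r₃])
    (hplanar₁ : e₁ ∈ affineSpan ℝ ({r₁, r₂, r₃} : Set (Fin 3 → ℝ)))
    (hplanar₂ : e₂ ∈ affineSpan ℝ ({r₁, r₂, r₃} : Set (Fin 3 → ℝ)))
    (hplanar₃ : e₃ ∈ affineSpan ℝ ({r₁, r₂, r₃} : Set (Fin 3 → ℝ)))
    (c : Fin 3 → ℝ)
    (hc₁ : ∃ s : ℝ, c = r₁ + s • (e₁ - r₁))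
    (hc₂ : ∃ s : ℝ, c = r₂ + s • (e₂ - r₂))
    (hc₃ : ∃ s : ℝ, c = r₃ + s • (e₃ - r₃))
    (hc₁₂ : c ∉ affineSpan ℝ ({r₁, r₂} : Set (Fin 3 → ℝ)))
    (hc₂₃ : c ∉ affineSpan ℝ ({r₂, r₃} : Set (Fin 3 → ℝ)))
    (hc₃₁ : c ∉ affineSpan ℝ ({r₃, r₁} : Set (Fin 3 → ℝ))) :
    ∃ w₁₂ w₂₃ w₃₁ u₁ u₂ u₃ : ℝ,
      w₁₂ ≠ 0 ∧ w₂₃ ≠ 0 ∧ w₃₁ ≠ 0 ∧ u₁ ≠ 0 ∧ u₂ ≠ 0 ∧ u₃ ≠ 0 ∧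
      u₁ • (r₁ - e₁) + w₃₁ • (r₁ - r₃) + w₁₂ • (r₁ - r₂) = 0 ∧
      u₂ • (r₂ - e₂) + w₁₂ • (r₂ - r₁) + w₂₃ • (r₂ - r₃) = 0 ∧
      u₃ • (r₃ - e₃) + w₂₃ • (r₃ - r₂) + w₃₁ • (r₃ - r₁) = 0 :=
  stmt_12_general r₁ r₂ r₃ e₁ e₂ e₃ hplanar₁ c hc₁ hc₂ hc₃ hc₁₂ hc₂₃ hc₃₁
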